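/- Let ξ solve dξ/dt = Aξ + BKξ(t_k) on [t_k, t_{k+1}) (control held constant at the value Kξ(t_k)), let P be symmetric positive definite and W(t) = ξ(t)ᵀPξ(t). Then dW/dt(t) = z(t)ᵀ G z(t) where z(t) = [(P^{1/2}ξ(t))ᵀ, (P^{1/2}ξ(t_k))ᵀ]ᵀ and G is the symmetric 2m×2m matrix with blocks G₁₁ = P^{1/2}AP^{−1/2} + (P^{1/2}AP^{−1/2})ᵀ, G₁₂ = P^{1/2}BKP^{−1/2}, G₂₁ = G₁₂ᵀ, G₂₂ = 0. Consequently λ_m(G)(W(t) + W(t_k)) ≤ dW/dt(t) ≤ λ_M(G)(W(t) + W(t_k)). -/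

import Mathlib

/-!
Since `P = QᵀQ`, `W = |Qξ|²`, and the product rule gives `dW/dt = 2 ξᵀP(Aξ + BKξ(t_k))`.
Conjugation by `Q` rewrites `ξᵀPMy` as `(Qξ)ᵀ(QMQ⁻¹)(Qy)`; splitting the factor `2` between a
matrix and its transpose turns this into the quadratic form `zᵀGz`. The eigenvalue bounds are the
Rayleigh bounds `λ_m(G)|z|² ≤ zᵀGz ≤ λ_M(G)|z|²`, i.e. `λ_m(G) • 1 ≤ G ≤ λ_M(G) • 1` in the
Loewner order, together with `|z|² = |Qξ(t)|² + |Qξ(t_k)|² = W(t) + W(t_k)`.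
-/

open Matrix

section Rayleigh

open scoped MatrixOrder

variable {n : Type*} [Fintype n] [DecidableEq n] {M : Matrix n n ℝ}

theorem Matrix.IsHermitian.iInf_eigenvalues_mul_dotProduct_le (hM : M.IsHermitian)
    (z : n → ℝ) : (⨅ i, hM.eigenvalues i) * (z ⬝ᵥ z) ≤ z ⬝ᵥ M *ᵥ z := by
  have hle : algebraMap ℝ (Matrix n n ℝ) (⨅ i, hM.eigenvalues i) ≤ M := by
    rw [algebraMap_le_iff_le_spectrum hM.isSelfAdjoint, hM.spectrum_real_eq_range_eigenvalues]
    rintro _ ⟨i, rfl⟩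
    exact ciInf_le (Set.finite_range _).bddBelow i
  simpa [sub_mulVec, Algebra.algebraMap_eq_smul_one, smul_mulVec, dotProduct_smul]
    using (le_iff.1 hle).dotProduct_mulVec_nonneg z

theorem Matrix.IsHermitian.dotProduct_mulVec_le_iSup_eigenvalues_mul (hM : M.IsHermitian)
    (z : n → ℝ) : z ⬝ᵥ M *ᵥ z ≤ (⨆ i, hM.eigenvalues i) * (z ⬝ᵥ z) := by
  have hle : M ≤ algebraMap ℝ (Matrix n n ℝ) (⨆ i, hM.eigenvalues i) := by
    rw [le_algebraMap_iff_spectrum_le hM.isSelfAdjoint, hM.spectrum_real_eq_range_eigenvalues]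
    rintro _ ⟨i, rfl⟩
    exact le_ciSup (Set.finite_range _).bddAbove i
  simpa [sub_mulVec, Algebra.algebraMap_eq_smul_one, smul_mulVec, dotProduct_smul]
    using (le_iff.1 hle).dotProduct_mulVec_nonneg z

end Rayleigh

section Derivatives

variable {m n : Type*} [Fintype n] {u v : ℝ → n → ℝ} {u' v' : n → ℝ} {t : ℝ}

theorem HasDerivAt.dotProduct (hu : HasDerivAt u u' t) (hv : HasDerivAt v v' t) :
    HasDerivAt (fun s => u s ⬝ᵥ v s) (u' ⬝ᵥ v t + u t ⬝ᵥ v') t :=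
  (HasDerivAt.fun_sum fun i _ => (hasDerivAt_pi.1 hu i).fun_mul (hasDerivAt_pi.1 hv i)).congr_deriv
    Finset.sum_add_distrib

theorem HasDerivAt.mulVec (M : Matrix m n ℝ) (hv : HasDerivAt v v' t) :
    HasDerivAt (fun s => M *ᵥ v s) (M *ᵥ v') t :=
  hasDerivAt_pi.2 fun i =>
    ((hasDerivAt_const t (M i)).dotProduct hv).congr_deriv (by rw [zero_dotProduct, zero_add]; rfl)

theorem HasDerivAt.dotProduct_mulVec_self {P : Matrix n n ℝ} (hP : Pᵀ = P)
    (hv : HasDerivAt v v' t) :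
    HasDerivAt (fun s => v s ⬝ᵥ P *ᵥ v s) (2 * (v t ⬝ᵥ P *ᵥ v')) t := by
  convert hv.dotProduct (hv.mulVec P) using 1
  rw [two_mul, ← dotProduct_transpose_mulVec, hP]

end Derivatives

section BlockForm

variable {n o R : Type*} [Fintype n] [Fintype o] [CommRing R]

theorem Matrix.sumElim_dotProduct_fromBlocks_mulVec_sumElim (A : Matrix n n R)
    (B : Matrix n o R) (C : Matrix o n R) (D : Matrix o o R) (u : n → R) (w : o → R) :
    Sum.elim u w ⬝ᵥ fromBlocks A B C D *ᵥ Sum.elim u w =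
      u ⬝ᵥ A *ᵥ u + u ⬝ᵥ B *ᵥ w + (w ⬝ᵥ C *ᵥ u + w ⬝ᵥ D *ᵥ w) := by
  rw [fromBlocks_mulVec, sumElim_dotProduct_sumElim, dotProduct_add, dotProduct_add,
    Sum.elim_comp_inl, Sum.elim_comp_inr]

theorem Matrix.mulVec_dotProduct_mulVec {m : Type*} [Fintype m] (Q : Matrix m n R)
    (u w : n → R) :
    Q *ᵥ u ⬝ᵥ Q *ᵥ w = u ⬝ᵥ (Qᵀ * Q) *ᵥ w := by
  rw [← mulVec_mulVec, dotProduct_transpose_mulVec, dotProduct_comm]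

theorem Matrix.mulVec_dotProduct_conj_mulVec [DecidableEq n] (Q M : Matrix n n R) [Invertible Q]
    (u w : n → R) :
    Q *ᵥ u ⬝ᵥ (Q * M * Q⁻¹) *ᵥ (Q *ᵥ w) = u ⬝ᵥ (Qᵀ * Q) *ᵥ (M *ᵥ w) := by
  rw [mulVec_mulVec, Matrix.inv_mul_cancel_right_of_invertible, ← mulVec_mulVec,
    mulVec_dotProduct_mulVec]

theorem Matrix.sumElim_dotProduct_fromBlocks_conj_mulVec_sumElim [DecidableEq n]
    (Q F H : Matrix n n R) [Invertible Q] (x y : n → R) :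
    Sum.elim (Q *ᵥ x) (Q *ᵥ y) ⬝ᵥ
        fromBlocks (Q * F * Q⁻¹ + (Q * F * Q⁻¹)ᵀ) (Q * H * Q⁻¹) (Q * H * Q⁻¹)ᵀ 0 *ᵥ
          Sum.elim (Q *ᵥ x) (Q *ᵥ y) =
      2 * (x ⬝ᵥ (Qᵀ * Q) *ᵥ (F *ᵥ x + H *ᵥ y)) := by
  rw [sumElim_dotProduct_fromBlocks_mulVec_sumElim, add_mulVec, dotProduct_add,
    dotProduct_transpose_mulVec, dotProduct_transpose_mulVec, zero_mulVec, dotProduct_zero,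
    mulVec_dotProduct_conj_mulVec, mulVec_dotProduct_conj_mulVec, mulVec_add, dotProduct_add]
  ring

end BlockForm

theorem stmt7_general {m l : ℕ} (A : Matrix (Fin m) (Fin m) ℝ) (B : Matrix (Fin m) (Fin l) ℝ)
    (K : Matrix (Fin l) (Fin m) ℝ)
    (P Q : Matrix (Fin m) (Fin m) ℝ)
    (hQsq : Q * Q = P) (hQsym : Qᵀ = Q) (hQinv : Invertible Q)
    (G : Matrix (Fin m ⊕ Fin m) (Fin m ⊕ Fin m) ℝ)
    (hGdef : G = Matrix.fromBlocks
      (Q * A * Q⁻¹ + (Q * A * Q⁻¹)ᵀ) (Q * (B * K) * Q⁻¹) ((Q * (B * K) * Q⁻¹)ᵀ) 0)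
    (hG : G.IsHermitian)
    (tk tk1 : ℝ) (xk : EuclideanSpace ℝ (Fin m))
    (ξ : ℝ → EuclideanSpace ℝ (Fin m))
    (hξ : ∀ t ∈ Set.Ico tk tk1, HasDerivAt ξ
      ((show EuclideanSpace ℝ (Fin m) from WithLp.toLp 2 (A.mulVec (ξ t))) +
       (show EuclideanSpace ℝ (Fin m) from WithLp.toLp 2 ((B * K).mulVec xk))) t) :
    ∀ t ∈ Set.Ico tk tk1,
      HasDerivAt (fun s => ξ s ⬝ᵥ P.mulVec (ξ s))
        (Sum.elim (Q.mulVec (ξ t)) (Q.mulVec xk) ⬝ᵥ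
          G.mulVec (Sum.elim (Q.mulVec (ξ t)) (Q.mulVec xk))) t ∧
      (⨅ i, hG.eigenvalues i) * (ξ t ⬝ᵥ P.mulVec (ξ t) + xk ⬝ᵥ P.mulVec xk) ≤
        Sum.elim (Q.mulVec (ξ t)) (Q.mulVec xk) ⬝ᵥ
          G.mulVec (Sum.elim (Q.mulVec (ξ t)) (Q.mulVec xk)) ∧
      Sum.elim (Q.mulVec (ξ t)) (Q.mulVec xk) ⬝ᵥ
          G.mulVec (Sum.elim (Q.mulVec (ξ t)) (Q.mulVec xk)) ≤
        (⨆ i, hG.eigenvalues i) * (ξ t ⬝ᵥ P.mulVec (ξ t) + xk ⬝ᵥ P.mulVec xk) := by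
  intro t ht
  have hPQ : P = Qᵀ * Q := by rw [hQsym, hQsq]
  have hPsymm : Pᵀ = P := by rw [hPQ, transpose_mul, transpose_transpose]
  have hdξ : HasDerivAt (fun s => (ξ s).ofLp) (A *ᵥ ξ t + (B * K) *ᵥ xk) t :=
    (PiLp.continuousLinearEquiv 2 ℝ fun _ : Fin m => ℝ).hasFDerivAt.comp_hasDerivAt t (hξ t ht)
  have hzz : Sum.elim (Q *ᵥ ξ t) (Q *ᵥ xk) ⬝ᵥ Sum.elim (Q *ᵥ ξ t) (Q *ᵥ xk) =
      ξ t ⬝ᵥ P *ᵥ ξ t + xk ⬝ᵥ P *ᵥ xk := by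
    rw [sumElim_dotProduct_sumElim, mulVec_dotProduct_mulVec, mulVec_dotProduct_mulVec, hPQ]
  refine ⟨?_, hzz ▸ hG.iInf_eigenvalues_mul_dotProduct_le _,
    hzz ▸ hG.dotProduct_mulVec_le_iSup_eigenvalues_mul _⟩
  rw [hGdef, sumElim_dotProduct_fromBlocks_conj_mulVec_sumElim, ← hPQ]
  exact hdξ.dotProduct_mulVec_self hPsymm

/-- For the sampled-data dynamics `dξ/dt = Aξ + BKξ(t_k)` and
`W(t) = ξ(t)ᵀPξ(t)`, one has `dW/dt = z(t)ᵀGz(t)` with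
`z(t) = [(P^{1/2}ξ(t))ᵀ (P^{1/2}ξ(t_k))ᵀ]ᵀ` and `G` the symmetric block matrix with
blocks `G₁₁ = P^{1/2}AP^{-1/2} + (P^{1/2}AP^{-1/2})ᵀ`, `G₁₂ = P^{1/2}BKP^{-1/2}`,
`G₂₁ = G₁₂ᵀ`, `G₂₂ = 0`; consequently
`λ_m(G)(W(t)+W(t_k)) ≤ dW/dt ≤ λ_M(G)(W(t)+W(t_k))`. -/
theorem stmt7 {m l : ℕ} (A : Matrix (Fin m) (Fin m) ℝ) (B : Matrix (Fin m) (Fin l) ℝ)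
    (K : Matrix (Fin l) (Fin m) ℝ)
    (P Q : Matrix (Fin m) (Fin m) ℝ) (hP : P.PosDef) (hQ : Q.PosDef)
    (hQsq : Q * Q = P) (hQsym : Qᵀ = Q) (hQinv : Invertible Q)
    (G : Matrix (Fin m ⊕ Fin m) (Fin m ⊕ Fin m) ℝ)
    (hGdef : G = Matrix.fromBlocks
      (Q * A * Q⁻¹ + (Q * A * Q⁻¹)ᵀ) (Q * (B * K) * Q⁻¹) ((Q * (B * K) * Q⁻¹)ᵀ) 0)
    (hG : G.IsHermitian)
    (tk tk1 : ℝ) (xk : EuclideanSpace ℝ (Fin m))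
    (ξ : ℝ → EuclideanSpace ℝ (Fin m)) (hξk : ξ tk = xk)
    (hξ : ∀ t ∈ Set.Ico tk tk1, HasDerivAt ξ
      ((show EuclideanSpace ℝ (Fin m) from WithLp.toLp 2 (A.mulVec (ξ t))) +
       (show EuclideanSpace ℝ (Fin m) from WithLp.toLp 2 ((B * K).mulVec xk))) t) :
    ∀ t ∈ Set.Ico tk tk1,
      HasDerivAt (fun s => ξ s ⬝ᵥ P.mulVec (ξ s))
        (Sum.elim (Q.mulVec (ξ t)) (Q.mulVec xk) ⬝ᵥ
          G.mulVec (Sum.elim (Q.mulVec (ξ t)) (Q.mulVec xk))) t ∧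
      (⨅ i, hG.eigenvalues i) * (ξ t ⬝ᵥ P.mulVec (ξ t) + xk ⬝ᵥ P.mulVec xk) ≤
        Sum.elim (Q.mulVec (ξ t)) (Q.mulVec xk) ⬝ᵥ
          G.mulVec (Sum.elim (Q.mulVec (ξ t)) (Q.mulVec xk)) ∧
      Sum.elim (Q.mulVec (ξ t)) (Q.mulVec xk) ⬝ᵥ
          G.mulVec (Sum.elim (Q.mulVec (ξ t)) (Q.mulVec xk)) ≤
        (⨆ i, hG.eigenvalues i) * (ξ t ⬝ᵥ P.mulVec (ξ t) + xk ⬝ᵥ P.mulVec xk) :=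
  stmt7_general A B K P Q hQsq hQsym hQinv G hGdef hG tk tk1 xk ξ hξ
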